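/- (Coercivity under the ground state threshold.) Let B > 2, α_c > 0, p > 1, and 0 < ν < 1. Let φ, u : ℝ^N → ℂ be functions with all the quantities below finite, and set E[w] := ‖√K_λ w‖² − (1/p) P[w], M[w] := ‖w‖², and I[w] := ‖√K_λ w‖² − (B/(2p)) P[w]. Assume the Pohozaev relation B·E[φ] = (B−2)·‖√K_λ φ‖², together with E[u]·M[u]^{α_c} ≤ (1−ν)·E[φ]·M[φ]^{α_c} and ‖√K_λ u‖²·M[u]^{α_c} ≥ ‖√K_λ φ‖²·M[φ]^{α_c}. Then I[u]·M[u]^{α_c} ≤ −ν·(B/2 − 1)·‖√K_λ φ‖²·M[φ]^{α_c}. -/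

import Mathlib

open MeasureTheory

noncomputable def gradNormSq {N : ℕ} (u : EuclideanSpace ℝ (Fin N) → ℂ)
    (x : EuclideanSpace ℝ (Fin N)) : ℝ :=
  ∑ i, ‖fderiv ℝ u x (EuclideanSpace.single i 1)‖ ^ 2

/-- The quantity `‖√K_λ u‖²`. -/
noncomputable def kineticK {N : ℕ} (lam : ℝ) (u : EuclideanSpace ℝ (Fin N) → ℂ) : ℝ :=
  (∫ x, gradNormSq u x) + lam * ∫ x, ‖u x‖ ^ 2 / ‖x‖ ^ 2

/-- The normalizing constant `c_{N,α}` of the Riesz potential. -/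
noncomputable def rieszConst (N : ℕ) (α : ℝ) : ℝ :=
  Real.Gamma (((N : ℝ) - α) / 2) /
    (Real.Gamma (α / 2) * Real.pi ^ ((N : ℝ) / 2) * (2 : ℝ) ^ α)

/-- Convolution `J_α ∗ g` of the Riesz potential with a real-valued function. -/
noncomputable def rieszConvR {N : ℕ} (α : ℝ) (g : EuclideanSpace ℝ (Fin N) → ℝ)
    (x : EuclideanSpace ℝ (Fin N)) : ℝ :=
  ∫ y, rieszConst N α * ‖x - y‖ ^ (α - (N : ℝ)) * g y

/-- The Hartree-type potential energy. -/
noncomputable def hartreeP {N : ℕ} (α τ p : ℝ) (u : EuclideanSpace ℝ (Fin N) → ℂ) : ℝ :=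
  ∫ x, ‖x‖ ^ (-τ) * rieszConvR α (fun y => ‖y‖ ^ (-τ) * ‖u y‖ ^ p) x * ‖u x‖ ^ p

/-- The energy `E[w] := ‖√K_λ w‖² − (1/p) P[w]`. -/
noncomputable def energyE {N : ℕ} (α τ lam p : ℝ)
    (w : EuclideanSpace ℝ (Fin N) → ℂ) : ℝ :=
  kineticK lam w - (1 / p) * hartreeP α τ p w

/-- The mass `M[w] := ‖w‖²`. -/
noncomputable def massM {N : ℕ} (w : EuclideanSpace ℝ (Fin N) → ℂ) : ℝ :=
  ∫ x, ‖w x‖ ^ 2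

/-- The virial functional `I[w] := ‖√K_λ w‖² − (B/(2p)) P[w]`. -/
noncomputable def virialI {N : ℕ} (α τ lam p B : ℝ)
    (w : EuclideanSpace ℝ (Fin N) → ℂ) : ℝ :=
  kineticK lam w - (B / (2 * p)) * hartreeP α τ p w

/-- Valid at `p = 0` too, where both sides use the junk value `1 / 0 = 0`. -/
theorem virialI_eq_energyE_sub_kineticK {N : ℕ} (α τ lam p B : ℝ)
    (w : EuclideanSpace ℝ (Fin N) → ℂ) :
    virialI α τ lam p B w = B / 2 * energyE α τ lam p w - (B / 2 - 1) * kineticK lam w := by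
  unfold virialI energyE
  ring

/-- Here `e, k` stand for `E[u] M[u]^αc, ‖√K_λ u‖² M[u]^αc` and `e₀, k₀` for the same quantities
of the ground state `φ`. -/
theorem half_mul_sub_le_of_pohozaev {B ν e k e₀ k₀ : ℝ} (hB : 2 ≤ B)
    (hPoh : B / 2 * e₀ = (B / 2 - 1) * k₀) (he : e ≤ (1 - ν) * e₀) (hk : k₀ ≤ k) :
    B / 2 * e - (B / 2 - 1) * k ≤ -ν * (B / 2 - 1) * k₀ :=
  calc B / 2 * e - (B / 2 - 1) * k
      ≤ B / 2 * ((1 - ν) * e₀) - (B / 2 - 1) * k₀ := by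
        gcongr; linarith
    _ = -ν * (B / 2 - 1) * k₀ := by linear_combination (1 - ν) * hPoh

theorem coercivity_ground_state_general (N : ℕ) (α τ lam p B αc ν : ℝ)
    (hB : 2 < B)
    (φ u : EuclideanSpace ℝ (Fin N) → ℂ)
    (hPoh : B * energyE α τ lam p φ = (B - 2) * kineticK lam φ)
    (hE : energyE α τ lam p u * massM u ^ αc ≤
      (1 - ν) * (energyE α τ lam p φ * massM φ ^ αc))
    (hK : kineticK lam φ * massM φ ^ αc ≤ kineticK lam u * massM u ^ αc) :
    virialI α τ lam p B u * massM u ^ αc ≤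
      -ν * (B / 2 - 1) * (kineticK lam φ * massM φ ^ αc) := by
  rw [virialI_eq_energyE_sub_kineticK, sub_mul, mul_assoc, mul_assoc]
  refine half_mul_sub_le_of_pohozaev hB.le ?_ hE hK
  linear_combination massM φ ^ αc / 2 * hPoh

/-- **Coercivity under the ground state threshold.** -/
theorem coercivity_ground_state (N : ℕ) (hN : 3 ≤ N) (α τ lam p B αc ν : ℝ)
    (hα : 0 < α) (hαN : α < N) (hτ : 0 < τ) (hlam : 0 ≤ lam)
    (hB : 2 < B) (hαc : 0 < αc) (hp : 1 < p) (hν0 : 0 < ν) (hν1 : ν < 1)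
    (φ u : EuclideanSpace ℝ (Fin N) → ℂ)
    (hPoh : B * energyE α τ lam p φ = (B - 2) * kineticK lam φ)
    (hE : energyE α τ lam p u * massM u ^ αc ≤
      (1 - ν) * (energyE α τ lam p φ * massM φ ^ αc))
    (hK : kineticK lam φ * massM φ ^ αc ≤ kineticK lam u * massM u ^ αc) :
    virialI α τ lam p B u * massM u ^ αc ≤
      -ν * (B / 2 - 1) * (kineticK lam φ * massM φ ^ αc) :=
  coercivity_ground_state_general N α τ lam p B αc ν hB φ u hPoh hE hK
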